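/- arXiv:1805.12033 — 4 statements merged into one kernel-verified Lean document; each statement's English description precedes it below -/
import Mathlib

section
/- Let n ≥ 2, α ∈ [0,1], and p : Fin n → ℝ with 0 < p i ≤ 1, sorted so that p is antitone (decreasing). Define F(k) = (1+α)·(∑_{i<k} p i) / (α·(∑_{i<n} p i) + k), and let k* be any index in {1,…,n} maximizing F. Then for the answer set achieving the maximum, F is nondecreasing on {1,…,k*} and nonincreasing on {k*,…,n}. -/
theorem stmt_2 (n : ℕ) (hn : 2 ≤ n) (α : ℝ) (hα : α ∈ Set.Icc (0:ℝ) 1)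
    (p : Fin n → ℝ) (hp : ∀ i, 0 < p i ∧ p i ≤ 1) (hanti : Antitone p)
    (T : ℝ) (hT : T = ∑ i, p i)
    (S : ℕ → ℝ)
    (hS : ∀ m, S m = ∑ i ∈ Finset.univ.filter (fun i : Fin n => (i : ℕ) < m), p i)
    (F : ℕ → ℝ) (hF : ∀ m, F m = (1 + α) * S m / (α * T + (m : ℝ)))
    (kstar : ℕ) (hk1 : 1 ≤ kstar) (hk2 : kstar ≤ n)
    (hmax : ∀ k, 1 ≤ k → k ≤ n → F k ≤ F kstar) :
    (∀ k l, 1 ≤ k → k ≤ l → l ≤ kstar → F k ≤ F l) ∧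
    (∀ k l, kstar ≤ k → k ≤ l → l ≤ n → F l ≤ F k) := by
  obtain ⟨hα0, hα1⟩ := hα
  have hT0 : 0 < T := by
    rw [hT]
    apply Finset.sum_pos (fun i _ => (hp i).1)
    have : Nonempty (Fin n) := ⟨⟨0, by omega⟩⟩
    exact Finset.univ_nonempty
  have hden : ∀ k : ℕ, 1 ≤ k → (0:ℝ) < α * T + k := by
    intro k hk
    have : (1:ℝ) ≤ (k:ℝ) := by exact_mod_cast hk
    nlinarith
  set q : ℕ → ℝ := fun k => if h : k < n then p ⟨k, h⟩ else 0 with hqdef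
  have hqanti : ∀ k, k + 1 < n → q (k+1) ≤ q k := by
    intro k hk
    have h1 : k < n := by omega
    simp only [hqdef, dif_pos hk, dif_pos h1]
    exact hanti (by simp [Fin.le_def])
  have hSstep : ∀ k, k < n → S (k+1) = S k + q k := by
    intro k hk
    simp only [hqdef, dif_pos hk]
    rw [hS, hS]
    have hins : Finset.univ.filter (fun i : Fin n => (i:ℕ) < k+1)
        = insert ⟨k, hk⟩ (Finset.univ.filter (fun i : Fin n => (i:ℕ) < k)) := by
      ext i
      simp only [Finset.mem_filter, Finset.mem_insert, Finset.mem_univ, true_and, Fin.ext_iff]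
      omega
    rw [hins, Finset.sum_insert (by simp)]
    ring
  set D : ℕ → ℝ := fun k => q k * (α * T + k) - S k with hDdef
  -- D is antitone on valid range
  have hDstep : ∀ k, k + 2 ≤ n → D (k+1) ≤ D k := by
    intro k hk
    simp only [hDdef]
    have h1 := hSstep k (by omega)
    have h2 := hqanti k (by omega)
    have h3 : (0:ℝ) ≤ α * T + (k+1) := by
      have : (0:ℝ) ≤ (k:ℝ) := Nat.cast_nonneg k
      nlinarith
    push_cast
    nlinarith [mul_le_mul_of_nonneg_right h2 h3]
  have hDmono : ∀ k l, k ≤ l → l + 1 ≤ n → D l ≤ D k := by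
    intro k l hkl hl
    induction l, hkl using Nat.le_induction with
    | base => exact le_refl _
    | succ l hl' ih =>
      exact (hDstep l (by omega)).trans (ih (by omega))
  -- step comparison iff
  have hiff : ∀ k, 1 ≤ k → k + 1 ≤ n →
      ((F (k+1) ≤ F k ↔ D k ≤ 0) ∧ (F k ≤ F (k+1) ↔ 0 ≤ D k)) := by
    intro k hk hkn
    have hd1 := hden k hk
    have hd2 := hden (k+1) (by omega)
    have hs := hSstep k (by omega)
    rw [hF (k+1), hF k]
    push_cast at hd2 ⊢
    rw [div_le_div_iff₀ hd2 hd1, div_le_div_iff₀ hd1 hd2, hs]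
    simp only [hDdef]
    have h1α : (0:ℝ) < 1 + α := by linarith
    constructor
    · constructor
      · intro h; nlinarith [mul_pos h1α (hd1)]
      · intro h; nlinarith [mul_pos h1α (hd1)]
    · constructor
      · intro h; nlinarith [mul_pos h1α (hd1)]
      · intro h; nlinarith [mul_pos h1α (hd1)]
  -- single up-steps below kstar
  have step_up : ∀ j, 1 ≤ j → j + 1 ≤ kstar → F j ≤ F (j+1) := by
    intro j hj hjk
    by_contra hcon
    push_neg at hcon
    have hjn : j + 1 ≤ n := le_trans hjk hk2
    have hD : D j < 0 := by
      by_contra hD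
      push_neg at hD
      exact absurd (((hiff j hj hjn).2).mpr hD) (not_le.mpr hcon)
    -- F m ≤ F (j+1) for j+1 ≤ m ≤ kstar
    have chain : ∀ m, j + 1 ≤ m → m ≤ kstar → F m ≤ F (j+1) := by
      intro m hm hmk
      induction m, hm using Nat.le_induction with
      | base => exact le_refl _
      | succ m hm' ih =>
        have hmn : m + 1 ≤ n := le_trans hmk hk2
        have hDm : D m ≤ 0 := le_of_lt (lt_of_le_of_lt (hDmono j m (by omega) hmn) hD)
        exact le_trans (((hiff m (by omega) hmn).1).mpr hDm) (ih (by omega))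
    have h1 := chain kstar (by omega) (le_refl _)
    have h2 := hmax j hj (by omega)
    linarith
  -- single down-steps above kstar
  have step_down : ∀ j, kstar ≤ j → j + 1 ≤ n → F (j+1) ≤ F j := by
    intro j hj hjn
    by_contra hcon
    push_neg at hcon
    have hD : 0 < D j := by
      by_contra hD
      push_neg at hD
      exact absurd (((hiff j (by omega) hjn).1).mpr hD) (not_le.mpr hcon)
    have chain : ∀ m, kstar ≤ m → m ≤ j → F kstar ≤ F m := by
      intro m hm hmj
      induction m, hm using Nat.le_induction with
      | base => exact le_refl _
      | succ m hm' ih =>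
        have hmn : m + 1 ≤ n := by omega
        have hDm : 0 ≤ D m := le_of_lt (lt_of_lt_of_le hD (hDmono m j (by omega) hjn))
        exact le_trans (ih (by omega)) (((hiff m (by omega) hmn).2).mpr hDm)
    have h1 := chain j hj (le_refl _)
    have h2 := hmax (j+1) (by omega) hjn
    linarith
  constructor
  · intro k l hk hkl hlk
    induction l, hkl using Nat.le_induction with
    | base => exact le_refl _
    | succ l hl ih =>
      exact le_trans (ih (by omega)) (step_up l (by omega) hlk)
  · intro k l hk hkl hln
    induction l, hkl using Nat.le_induction with
    | base => exact le_refl _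
    | succ l hl ih =>
      exact le_trans (step_down l (by omega) hln) (ih (by omega))
end

section
/- Let n ≥ 2, α ∈ [0,1], p : Fin n → ℝ with 0 < p i ≤ 1 sorted decreasingly, T = ∑_i p i, and S_k = ∑_{i<k} p i. Then for 1 ≤ τ < n, the expected F_α measure satisfies F(τ+1) < F(τ) if and only if p_{τ+1} < S_τ / (τ + α·T), where F(k) = (1+α)·S_k/(α·T + k). Consequently, F(τ+1) ≥ F(τ) if and only if p_{τ+1} ≥ S_τ/(τ + α·T). -/
theorem stmt_3 (n : ℕ) (hn : 2 ≤ n) (α : ℝ) (hα : α ∈ Set.Icc (0:ℝ) 1)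
    (p : Fin n → ℝ) (hp : ∀ i, 0 < p i ∧ p i ≤ 1) (hanti : Antitone p)
    (T : ℝ) (hT : T = ∑ i, p i)
    (S : ℕ → ℝ)
    (hS : ∀ m, S m = ∑ i ∈ Finset.univ.filter (fun i : Fin n => (i : ℕ) < m), p i)
    (F : ℕ → ℝ) (hF : ∀ m, F m = (1 + α) * S m / (α * T + (m : ℝ)))
    (τ : ℕ) (hτ1 : 1 ≤ τ) (hτn : τ < n) :
    (F (τ + 1) < F τ ↔ p ⟨τ, hτn⟩ < S τ / ((τ : ℝ) + α * T)) ∧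
    (F τ ≤ F (τ + 1) ↔ S τ / ((τ : ℝ) + α * T) ≤ p ⟨τ, hτn⟩) := by
  have hT0 : 0 ≤ T := by
    rw [hT]; exact Finset.sum_nonneg fun i _ => (hp i).1.le
  have hαT : 0 ≤ α * T := mul_nonneg hα.1 hT0
  have hτ1' : (1 : ℝ) ≤ (τ : ℝ) := by exact_mod_cast hτ1
  have hd1 : 0 < α * T + (τ : ℝ) := by linarith
  have hd2 : 0 < α * T + ((τ : ℝ) + 1) := by linarith
  have h1α : 0 < 1 + α := by linarith [hα.1]
  have hSsucc : S (τ + 1) = S τ + p ⟨τ, hτn⟩ := by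
    rw [hS, hS]
    have hset : Finset.univ.filter (fun i : Fin n => (i : ℕ) < τ + 1)
        = insert ⟨τ, hτn⟩ (Finset.univ.filter (fun i : Fin n => (i : ℕ) < τ)) := by
      ext i
      simp only [Finset.mem_insert, Finset.mem_filter, Finset.mem_univ, true_and]
      constructor
      · intro h
        rcases Nat.lt_succ_iff_lt_or_eq.mp h with h | h
        · exact Or.inr h
        · exact Or.inl (Fin.ext h)
      · rintro (h | h)
        · subst h; exact Nat.lt_succ_self τ
        · exact Nat.lt_succ_of_lt h
    rw [hset, Finset.sum_insert (by simp)]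
    ring
  have key : F (τ + 1) < F τ ↔ p ⟨τ, hτn⟩ < S τ / ((τ : ℝ) + α * T) := by
    rw [hF, hF, hSsucc]
    push_cast
    rw [div_lt_div_iff₀ hd2 hd1, lt_div_iff₀ (by linarith)]
    constructor
    · intro h; nlinarith
    · intro h; nlinarith
  refine ⟨key, ?_⟩
  rw [← not_lt, ← not_lt, key]
end

section
/- Let n ≥ 1, α ∈ [0,1], and p : Fin n → ℝ with 0 < p i ≤ 1, sorted decreasingly. Then the maximum of E(F_α, A; p) over all nonempty subsets A ⊆ Fin n is attained at some prefix set A = {0, 1, …, k−1}. That is, there exists k ∈ {1,…,n} with E(F_α, {i : i < k}; p) = max over all nonempty A of E(F_α, A; p). -/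
theorem stmt_8 (n : ℕ) (hn : 1 ≤ n) (α : ℝ) (hα : α ∈ Set.Icc (0:ℝ) 1)
    (p : Fin n → ℝ) (hp : ∀ i, 0 < p i ∧ p i ≤ 1) (hanti : Antitone p)
    (E : Finset (Fin n) → ℝ)
    (hE : ∀ A, E A = (1 + α) * (∑ i ∈ A, p i) / (α * (∑ i, p i) + (A.card : ℝ))) :
    ∃ k : ℕ, 1 ≤ k ∧ k ≤ n ∧
      ∀ A : Finset (Fin n), A.Nonempty →
        E A ≤ E (Finset.univ.filter fun i : Fin n => (i : ℕ) < k) := by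
  classical
  set S : Finset (Finset (Fin n)) :=
    Finset.univ.filter (fun A => A.Nonempty) with hS
  have hSne : S.Nonempty := by
    refine ⟨{⟨0, hn⟩}, ?_⟩
    simp [hS]
  obtain ⟨A₀, hA₀S, hmax⟩ := S.exists_max_image E hSne
  have hA₀ne : A₀.Nonempty := by
    simpa [hS] using hA₀S
  set k := A₀.card with hk
  have hk1 : 1 ≤ k := Finset.card_pos.mpr hA₀ne
  have hkn : k ≤ n := by
    simpa using A₀.card_le_univ
  refine ⟨k, hk1, hkn, ?_⟩
  set P : Finset (Fin n) := Finset.univ.filter (fun i : Fin n => (i : ℕ) < k) with hP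
  have hPcard : P.card = k := by
    have : P.card = ((Finset.range n).filter (fun m => m < k)).card := by
      rw [hP]
      rw [← Finset.card_image_of_injective _ Fin.val_injective]
      congr 1
      ext m
      simp only [Finset.mem_image, Finset.mem_filter, Finset.mem_univ, true_and,
        Finset.mem_range]
      constructor
      · rintro ⟨i, hi, rfl⟩; exact ⟨i.isLt, hi⟩
      · rintro ⟨hmn, hmk⟩; exact ⟨⟨m, hmn⟩, hmk, rfl⟩
    rw [this]
    have h2 : (Finset.range n).filter (fun m => m < k) = Finset.range k := by
      ext m; simp only [Finset.mem_filter, Finset.mem_range]; omega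
    rw [h2, Finset.card_range]
  -- key: sum over A₀ ≤ sum over P
  have hsum : ∑ i ∈ A₀, p i ≤ ∑ i ∈ P, p i := by
    have hcard : (A₀ \ P).card = (P \ A₀).card := by
      have h1 := Finset.card_sdiff_add_card_inter A₀ P
      have h2 := Finset.card_sdiff_add_card_inter P A₀
      rw [Finset.inter_comm] at h2
      omega
    have key : ∑ i ∈ A₀ \ P, p i ≤ ∑ i ∈ P \ A₀, p i := by
      rcases Finset.eq_empty_or_nonempty (P \ A₀) with h | h
      · have : (A₀ \ P) = ∅ := Finset.card_eq_zero.mp (by rw [hcard, h]; simp)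
        simp [this, h]
      · obtain ⟨j, hjmem, hjmin⟩ := Finset.exists_min_image (P \ A₀) p h
        have hle : ∀ i ∈ A₀ \ P, p i ≤ p j := by
          intro i hi
          apply hanti
          have hiP : ¬ ((i : ℕ) < k) := by
            intro hik
            exact (Finset.mem_sdiff.mp hi).2 (by simp [hP, hik])
          have hjP : (j : ℕ) < k := by
            have := (Finset.mem_sdiff.mp hjmem).1
            simpa [hP] using this
          exact Fin.le_def.mpr (by omega)
        calc ∑ i ∈ A₀ \ P, p i ≤ (A₀ \ P).card • p j :=
              Finset.sum_le_card_nsmul _ _ _ hle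
          _ = (P \ A₀).card • p j := by rw [hcard]
          _ ≤ ∑ i ∈ P \ A₀, p i := Finset.card_nsmul_le_sum _ _ _ hjmin
    have hA := Finset.sum_inter_add_sum_sdiff A₀ P p
    have hPs := Finset.sum_inter_add_sum_sdiff P A₀ p
    rw [Finset.inter_comm] at hPs
    linarith
  intro A hAne
  have hAS : A ∈ S := by simp [hS, hAne]
  refine (hmax A hAS).trans ?_
  rw [hE A₀, hE P, hPcard, ← hk]
  have hTpos : 0 < ∑ i, p i := by
    apply Finset.sum_pos (fun i _ => (hp i).1)
    exact ⟨⟨0, hn⟩, Finset.mem_univ _⟩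
  have hden : 0 < α * (∑ i, p i) + (k : ℝ) := by
    have : 0 ≤ α * ∑ i, p i := mul_nonneg hα.1 hTpos.le
    have : (1 : ℝ) ≤ (k : ℝ) := by exact_mod_cast hk1
    linarith
  have h1α : (0:ℝ) ≤ 1 + α := by linarith [hα.1]
  exact (div_le_div_iff_of_pos_right hden).mpr (mul_le_mul_of_nonneg_left hsum h1α)
end

section
/- Let α ∈ [0,1] and let p : Fin n → ℝ with 0 < p i ≤ 1 sorted decreasingly, with threshold index τ (1 ≤ τ ≤ n) defined as the smallest index such that prefix of size τ maximizes F(k) = (1+α)·S_k/(α·T + k). Let L' be the multiset obtained by repeating each p i exactly m times (m ≥ 1), sorted decreasingly. Then the threshold probability value of L' equals the threshold probability value of L: the value p_τ at which F is maximized is invariant under uniform m-fold duplication of all probabilities. -/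
lemma aux_sum_filter {N : ℕ} (q : Fin N → ℝ) :
    ∀ k, k ≤ N →
    ∑ i ∈ Finset.univ.filter (fun i : Fin N => (i : ℕ) < k), q i
      = ∑ i ∈ Finset.range k, (if h : i < N then q ⟨i, h⟩ else 0) := by
  intro k
  induction k with
  | zero => intro _; simp
  | succ k ih =>
    intro hk
    have hkN : k < N := hk
    rw [Finset.sum_range_succ, ← ih (le_of_lt hkN), dif_pos hkN]
    have hset : (Finset.univ.filter (fun i : Fin N => (i : ℕ) < k + 1))
        = insert (⟨k, hkN⟩ : Fin N) (Finset.univ.filter (fun i : Fin N => (i : ℕ) < k)) := by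
      ext i
      simp [Fin.ext_iff]
      omega
    rw [hset, Finset.sum_insert (by simp)]
    ring

lemma aux_sum_blocks (m : ℕ) (hm : 1 ≤ m) (a : ℕ → ℝ) :
    ∀ k, ∑ i ∈ Finset.range k, a (i / m)
      = (m : ℝ) * (∑ i ∈ Finset.range (k / m), a i) + ((k % m : ℕ) : ℝ) * a (k / m) := by
  intro k
  induction k with
  | zero => simp
  | succ k ih =>
    rw [Finset.sum_range_succ, ih]
    have hm0 : 0 < m := hm
    have hr : k % m < m := Nat.mod_lt _ hm0
    have hk : m * (k / m) + k % m = k := Nat.div_add_mod k m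
    by_cases h1 : k % m + 1 = m
    · have hms : m * (k / m + 1) = m * (k / m) + m := Nat.mul_succ m (k/m)
      have he : k + 1 = m * (k / m + 1) := by omega
      have hd : (k+1) / m = k / m + 1 := by rw [he, Nat.mul_div_cancel_left _ hm0]
      have hmo : (k+1) % m = 0 := by rw [he, Nat.mul_mod_right]
      rw [hd, hmo, Finset.sum_range_succ]
      have hc : ((k % m : ℕ) : ℝ) + 1 = (m : ℝ) := by exact_mod_cast h1
      push_cast
      linear_combination a (k / m) * hc
    · have h2 : k % m + 1 < m := by omega
      have he : k + 1 = m * (k / m) + (k % m + 1) := by omega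
      have hd : (k+1)/m = k/m := by
        rw [he, Nat.mul_add_div hm0, Nat.div_eq_of_lt h2, Nat.add_zero]
      have hmo : (k+1)%m = k%m + 1 := by rw [he, Nat.mul_add_mod, Nat.mod_eq_of_lt h2]
      rw [hd, hmo]
      push_cast
      ring

lemma aux_frac_le_max (A D c r M : ℝ) (hD : 0 < D) (hM : 0 < M) (hr0 : 0 ≤ r) (hrM : r ≤ M) :
    (A + r*c)/(D + r) ≤ max (A/D) ((A + M*c)/(D + M)) := by
  rcases le_or_gt (c*D) A with h | h
  · refine le_max_of_le_left ?_
    rw [div_le_div_iff₀ (by linarith) hD]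
    nlinarith [mul_nonneg hr0 (sub_nonneg.2 h)]
  · refine le_max_of_le_right ?_
    rw [div_le_div_iff₀ (by linarith) (by linarith)]
    nlinarith [mul_nonneg (sub_nonneg.2 hrM) (sub_nonneg.2 h.le)]

/-- Expected F_α measure of the prefix of size `k` of a probability vector `q`. -/
noncomputable def Fmeas (α : ℝ) {N : ℕ} (q : Fin N → ℝ) (k : ℕ) : ℝ :=
  (1 + α) * (∑ i ∈ Finset.univ.filter (fun i : Fin N => (i : ℕ) < k), q i) /
    (α * (∑ i, q i) + (k : ℝ))

theorem stmt_9 (n m : ℕ) (hn : 1 ≤ n) (hm : 1 ≤ m) (α : ℝ) (hα : α ∈ Set.Icc (0:ℝ) 1)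
    (p : Fin n → ℝ) (hp : ∀ i, 0 < p i ∧ p i ≤ 1) (hanti : Antitone p)
    (p' : Fin (m * n) → ℝ)
    (hp' : ∀ i : Fin (m * n), p' i = p ⟨(i : ℕ) / m, Nat.div_lt_of_lt_mul i.2⟩)
    (τ τ' : ℕ)
    (hτ1 : 1 ≤ τ) (hτn : τ ≤ n)
    (hτ'1 : 1 ≤ τ') (hτ'n : τ' ≤ m * n)
    (hmax : ∀ k, 1 ≤ k → k ≤ n → Fmeas α p k ≤ Fmeas α p τ)
    (hmin : ∀ σ, 1 ≤ σ → σ ≤ n →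
      (∀ k, 1 ≤ k → k ≤ n → Fmeas α p k ≤ Fmeas α p σ) → τ ≤ σ)
    (hmax' : ∀ k, 1 ≤ k → k ≤ m * n → Fmeas α p' k ≤ Fmeas α p' τ')
    (hmin' : ∀ σ, 1 ≤ σ → σ ≤ m * n →
      (∀ k, 1 ≤ k → k ≤ m * n → Fmeas α p' k ≤ Fmeas α p' σ) → τ' ≤ σ) :
    p ⟨τ - 1, by omega⟩ = p' ⟨τ' - 1, by omega⟩ := by
  have hm0 : 0 < m := hm
  have hα0 : 0 ≤ α := hα.1
  -- extension of p to ℕ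
  set a : ℕ → ℝ := fun i => if h : i < n then p ⟨i, h⟩ else 0 with ha
  set Sa : ℕ → ℝ := fun k => ∑ i ∈ Finset.range k, a i with hSa
  have ha_nonneg : ∀ j, 0 ≤ a j := by
    intro j
    by_cases h : j < n
    · simp only [ha, dif_pos h]; exact (hp _).1.le
    · simp only [ha, dif_neg h]; exact le_refl 0
  -- total masses
  set T : ℝ := ∑ i, p i with hTdef
  have hT_eq : T = Sa n := by
    rw [hTdef, hSa]
    rw [show (Finset.univ : Finset (Fin n))
        = Finset.univ.filter (fun i : Fin n => (i : ℕ) < n) by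
      refine (Finset.filter_true_of_mem (fun i _ => i.isLt)).symm]
    exact aux_sum_filter p n le_rfl
  have hT_pos : 0 < T := by
    rw [hTdef]
    exact Finset.sum_pos (fun i _ => (hp i).1) ⟨⟨0, hn⟩, Finset.mem_univ _⟩
  -- formula for Fmeas of p
  have hF : ∀ k, k ≤ n → Fmeas α p k = (1 + α) * Sa k / (α * T + k) := by
    intro k hk
    unfold Fmeas
    rw [aux_sum_filter p k hk]
  -- sums of p'
  have hfs : ∀ k, k ≤ m * n →
      (∑ i ∈ Finset.univ.filter (fun i : Fin (m*n) => (i : ℕ) < k), p' i)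
        = (m : ℝ) * Sa (k / m) + ((k % m : ℕ) : ℝ) * a (k / m) := by
    intro k hk
    rw [aux_sum_filter p' k hk]
    have : ∀ i ∈ Finset.range k,
        (if h : i < m * n then p' ⟨i, h⟩ else 0) = a (i / m) := by
      intro i hi
      have hi' : i < m * n := lt_of_lt_of_le (Finset.mem_range.1 hi) hk
      rw [dif_pos hi', hp' ⟨i, hi'⟩]
      have : i / m < n := Nat.div_lt_of_lt_mul hi'
      simp only [ha, dif_pos this]
    rw [Finset.sum_congr rfl this, aux_sum_blocks m hm a k]
  have hmass' : (∑ i, p' i) = (m : ℝ) * T := by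
    have h1 : (Finset.univ : Finset (Fin (m*n)))
        = Finset.univ.filter (fun i : Fin (m*n) => (i : ℕ) < m * n) :=
      (Finset.filter_true_of_mem (fun i _ => i.isLt)).symm
    rw [h1, hfs (m*n) le_rfl, Nat.mul_div_cancel_left _ hm0, Nat.mul_mod_right]
    rw [hT_eq]
    simp
  have hF' : ∀ k, k ≤ m * n → Fmeas α p' k
      = (1 + α) * ((m : ℝ) * Sa (k / m) + ((k % m : ℕ) : ℝ) * a (k / m))
        / (α * ((m : ℝ) * T) + k) := by
    intro k hk
    unfold Fmeas
    rw [hfs k hk, hmass']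
  -- Fmeas of p' at multiples of m
  have hFF' : ∀ j, j ≤ n → Fmeas α p' (m * j) = Fmeas α p j := by
    intro j hj
    have hj' : m * j ≤ m * n := Nat.mul_le_mul_left m hj
    rw [hF' (m*j) hj', hF j hj, Nat.mul_div_cancel_left _ hm0, Nat.mul_mod_right]
    have hden : α * ((m : ℝ) * T) + ((m * j : ℕ) : ℝ) = (m : ℝ) * (α * T + j) := by
      push_cast; ring
    rw [hden]
    rw [show (1 + α) * ((m : ℝ) * Sa j + ((0:ℕ):ℝ) * a j) = (m:ℝ) * ((1+α) * Sa j) by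
      push_cast; ring]
    exact mul_div_mul_left _ _ (by positivity)
  -- denominators positive
  have hden : ∀ k : ℕ, 1 ≤ k → 0 < α * T + (k : ℝ) := by
    intro k hk
    have : (1:ℝ) ≤ (k:ℝ) := by exact_mod_cast hk
    nlinarith
  have hden' : ∀ k : ℕ, 1 ≤ k → 0 < α * ((m:ℝ) * T) + (k : ℝ) := by
    intro k hk
    have h1 : (1:ℝ) ≤ (k:ℝ) := by exact_mod_cast hk
    have h2 : (0:ℝ) ≤ α * ((m:ℝ) * T) :=
      mul_nonneg hα0 (mul_nonneg (by positivity) hT_pos.le)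
    linarith
  -- block lemma: every F' value is dominated by some F value at a controlled index
  have hblock : ∀ k, 1 ≤ k → k ≤ m * n → ∃ σ, 1 ≤ σ ∧ σ ≤ n ∧
      σ ≤ k / m + 1 ∧ (k % m = 0 → σ ≤ k / m) ∧ Fmeas α p' k ≤ Fmeas α p σ := by
    intro k hk1 hk2
    have hkdm : m * (k / m) + k % m = k := Nat.div_add_mod k m
    have hjn : k / m ≤ n := by
      calc k / m ≤ (m * n) / m := Nat.div_le_div_right hk2
        _ = n := Nat.mul_div_cancel_left _ hm0
    by_cases hr : k % m = 0
    · -- k is a multiple of m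
      have hj1 : 1 ≤ k / m := by
        rcases Nat.eq_zero_or_pos (k / m) with h | h
        · rw [h, Nat.mul_zero] at hkdm; omega
        · exact h
      refine ⟨k / m, hj1, hjn, by omega, fun _ => le_rfl, ?_⟩
      have heq : k = m * (k / m) := by omega
      have h := hFF' (k / m) hjn
      rw [← h, ← heq]
    · have hr1 : 1 ≤ k % m := Nat.one_le_iff_ne_zero.2 hr
      have hrm : k % m < m := Nat.mod_lt _ hm0
      by_cases hj : k / m = 0
      · -- first block: compare with Fmeas α p 1
        rw [hj, Nat.mul_zero, Nat.zero_add] at hkdm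
        refine ⟨1, le_rfl, hn, by omega, by omega, ?_⟩
        rw [hF' k hk2, hF 1 hn]
        rw [hj]
        have hS0 : Sa 0 = 0 := by simp [hSa]
        have hS1 : Sa 1 = a 0 := by simp [hSa]
        rw [hS0, hS1]
        have hk0 : (1:ℝ) ≤ (k:ℝ) := by exact_mod_cast hk1
        have hkm : (k:ℝ) ≤ (m:ℝ) := by
          have : k ≤ m := by omega
          exact_mod_cast this
        have hkr : ((k % m : ℕ) : ℝ) = (k : ℝ) := by
          have : k % m = k := by omega
          exact_mod_cast this
        rw [hkr]
        rw [div_le_div_iff₀ (hden' k hk1) (hden 1 le_rfl)]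
        have ha0 : 0 ≤ a 0 := ha_nonneg 0
        have hT0 : 0 ≤ α * T := by positivity
        have hkey2 : (0:ℝ) ≤ ((1 + α) * a 0) * (((m:ℝ) - (k:ℝ)) * (α * T)) :=
          mul_nonneg (mul_nonneg (by linarith) ha0)
            (mul_nonneg (by linarith) (mul_nonneg hα0 hT_pos.le))
        push_cast
        nlinarith [hkey2]
      · -- interior block, j ≥ 1 : mediant argument
        have hj1 : 1 ≤ k / m := Nat.one_le_iff_ne_zero.2 hj
        have hjn' : k / m < n := by
          have h1 : m * (k / m) < k := by omega
          have : m * (k / m) < m * n := lt_of_lt_of_le h1 hk2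
          exact Nat.lt_of_mul_lt_mul_left this
        set j := k / m with hjdef
        set A : ℝ := (1 + α) * ((m : ℝ) * Sa j) with hA
        set c : ℝ := (1 + α) * a j with hc
        set D : ℝ := α * ((m:ℝ) * T) + ((m * j : ℕ) : ℝ) with hD
        have hDpos : 0 < D := hden' (m*j) (Nat.mul_pos hm0 hj1)
        have hMpos : (0:ℝ) < (m:ℝ) := by positivity
        have hkey : Fmeas α p' k ≤ max (Fmeas α p' (m * j)) (Fmeas α p' (m * (j+1))) := by
          have e1 : Fmeas α p' k = (A + ((k % m : ℕ) : ℝ) * c) / (D + ((k % m : ℕ) : ℝ)) := by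
            rw [hF' k hk2, hA, hc, hD]
            congr 1
            · push_cast; ring
            · push_cast
              have : (k:ℝ) = (m:ℝ) * (j:ℝ) + ((k % m : ℕ) : ℝ) := by
                exact_mod_cast hkdm.symm
              rw [this]; ring
          have e2 : Fmeas α p' (m * j) = A / D := by
            rw [hF' (m*j) (le_trans (by omega) hk2), Nat.mul_div_cancel_left _ hm0,
              Nat.mul_mod_right, hA, hD]
            push_cast; ring_nf
          have e3 : Fmeas α p' (m * (j+1)) = (A + (m:ℝ) * c) / (D + (m:ℝ)) := by
            rw [hF' (m*(j+1)) (Nat.mul_le_mul_left m hjn'), Nat.mul_div_cancel_left _ hm0,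
              Nat.mul_mod_right, hA, hc, hD]
            have hSsucc : Sa (j+1) = Sa j + a j := Finset.sum_range_succ a j
            rw [hSsucc]
            congr 1
            · push_cast; ring
            · push_cast; ring
          rw [e1, e2, e3]
          exact aux_frac_le_max A D c _ _ hDpos hMpos (by positivity)
            (by exact_mod_cast hrm.le)
        rcases le_max_iff.1 hkey with h | h
        · exact ⟨j, hj1, le_of_lt hjn', by omega, by omega,
            by rw [← hFF' j (le_of_lt hjn')]; exact h⟩
        · exact ⟨j+1, by omega, hjn', by omega, by omega,
            by rw [← hFF' (j+1) hjn']; exact h⟩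
  -- every F' value is at most F τ
  have hkey : ∀ k, 1 ≤ k → k ≤ m * n → Fmeas α p' k ≤ Fmeas α p τ := by
    intro k hk1 hk2
    obtain ⟨σ, h1, h2, _, _, h5⟩ := hblock k hk1 hk2
    exact le_trans h5 (hmax σ h1 h2)
  -- upper bound: τ' ≤ m * τ
  have hub : τ' ≤ m * τ := by
    apply hmin' (m * τ) (Nat.mul_pos hm0 hτ1) (Nat.mul_le_mul_left m hτn)
    intro k hk1 hk2
    rw [hFF' τ hτn]
    exact hkey k hk1 hk2
  -- F' τ' equals F τ
  have hval : Fmeas α p' τ' = Fmeas α p τ := by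
    refine le_antisymm (hkey τ' hτ'1 hτ'n) ?_
    rw [← hFF' τ hτn]
    exact hmax' (m * τ) (Nat.mul_pos hm0 hτ1) (Nat.mul_le_mul_left m hτn)
  -- lower bound: m * (τ - 1) < τ'
  have hlb : m * (τ - 1) < τ' := by
    by_contra hcon
    push_neg at hcon
    have hτ2 : 2 ≤ τ := by
      by_contra h
      have hτe : τ = 1 := by omega
      rw [hτe] at hcon
      simp at hcon
      omega
    obtain ⟨σ, h1, h2, h3, h4, h5⟩ := hblock τ' hτ'1 hτ'n
    have hσmax : Fmeas α p σ = Fmeas α p τ := by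
      refine le_antisymm (hmax σ h1 h2) ?_
      rw [← hval]; exact h5
    have hτσ : τ ≤ σ := by
      apply hmin σ h1 h2
      intro k hk1 hk2
      rw [hσmax]
      exact hmax k hk1 hk2
    -- σ ≤ τ - 1 : contradiction
    have hdiv : τ' / m ≤ τ - 1 := by
      calc τ' / m ≤ (m * (τ - 1)) / m := Nat.div_le_div_right hcon
        _ = τ - 1 := Nat.mul_div_cancel_left _ hm0
    have hστ1 : σ ≤ τ - 1 := by
      by_cases hr : τ' % m = 0
      · exact le_trans (h4 hr) hdiv
      · -- τ' % m ≥ 1, so m * (τ'/m) < τ' ≤ m * (τ-1), hence τ'/m < τ-1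
        have hkdm : m * (τ' / m) + τ' % m = τ' := Nat.div_add_mod τ' m
        have hlt : m * (τ' / m) < m * (τ - 1) := by omega
        have : τ' / m < τ - 1 := Nat.lt_of_mul_lt_mul_left hlt
        omega
    omega
  -- conclude: (τ' - 1) / m = τ - 1
  have hdiv : (τ' - 1) / m = τ - 1 := by
    have h1 : m * (τ - 1) ≤ τ' - 1 := by omega
    have h2 : τ' - 1 < (τ - 1 + 1) * m := by
      have hmt : (τ - 1 + 1) * m = m * τ := by
        rw [Nat.mul_comm]; congr 1; omega
      omega
    exact Nat.div_eq_of_lt_le (by rw [Nat.mul_comm]; exact h1) h2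
  rw [hp' ⟨τ' - 1, by omega⟩]
  congr 1
  exact Fin.ext hdiv.symm
end
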